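/- Let (ρ,σ) ∈ 𝔙 and let P, Q ∈ L^(l)∖{0} be such that [P,Q] ∈ K∖{0}. If v_{ρ,σ}(P) ≠ 0, then there exists G₀ ∈ K[P,Q] (the K-subalgebra of L^(l) generated by P and Q) such that [ℓ_{ρ,σ}(G₀), ℓ_{ρ,σ}(P)] ≠ 0 and [[ℓ_{ρ,σ}(G₀), ℓ_{ρ,σ}(P)], ℓ_{ρ,σ}(P)] = 0. Moreover, defining recursively G_i := [G_{i−1}, P], one has [ℓ_{ρ,σ}(G_i), ℓ_{ρ,σ}(P)] = 0 for all i ≥ 1. -/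

import Mathlib

/-!
Formalization framework for "On the shape of possible counterexamples to the Jacobian
Conjecture" by Guccione–Guccione–Valqui.

The algebra `L^(l) = K[x^{1/l}, x^{-1/l}, y]` is modelled as the monoid algebra of the
additive monoid `ℤ × ℕ` over `K`, where the exponent pair `(i, j)` encodes the monomial
`x^(i/l) * y^j`.
-/

open scoped Classical

set_option linter.unusedSectionVars false

noncomputable section

namespace JC

variable (K : Type*) [Field K] [CharZero K]

/-- `L^(l)`, modelled as the monoid algebra on `ℤ × ℕ`. -/
abbrev Ll := AddMonoidAlgebra K (ℤ × ℕ)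

variable {K}

/-- The variable `x = (x^{1/l})^l` of `L = K[x,y] ⊆ L^(l)`. -/
def xVar (l : ℕ) : Ll K := AddMonoidAlgebra.single ((l : ℤ), (0 : ℕ)) (1 : K)

/-- The variable `y`. -/
def yVar : Ll K := AddMonoidAlgebra.single ((0 : ℤ), (1 : ℕ)) (1 : K)

/-- The partial derivative `∂ₓ` on `L^(l)`:  `x^(i/l) y^j ↦ (i/l) x^(i/l - 1) y^j`. -/
def dX (l : ℕ) (P : Ll K) : Ll K :=
  Finsupp.sum P.coeff fun p c => AddMonoidAlgebra.single (p.1 - (l : ℤ), p.2) (c * ((p.1 : K) / (l : K)))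

/-- The partial derivative `∂ᵧ` on `L^(l)`. -/
def dY (P : Ll K) : Ll K :=
  Finsupp.sum P.coeff fun p c => AddMonoidAlgebra.single (p.1, p.2 - 1) (c * (p.2 : K))

/-- The Jacobian `[P,Q] = ∂ₓP ∂ᵧQ − ∂ᵧP ∂ₓQ`. -/
def br (l : ℕ) (P Q : Ll K) : Ll K := dX l P * dY Q - dY P * dX l Q

/-- `[P,Q] ∈ K^×`, i.e. the Jacobian is a nonzero constant. -/
def JacConst (l : ℕ) (P Q : Ll K) : Prop :=
  ∃ c : K, c ≠ 0 ∧ br l P Q = algebraMap K (Ll K) c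

/-- Membership in `L = K[x,y] ⊆ L^(l)`: all exponents `i/l` are nonnegative integers. -/
def InL (l : ℕ) (P : Ll K) : Prop := ∀ p ∈ P.coeff.support, 0 ≤ p.1 ∧ (l : ℤ) ∣ p.1

/-- The point `(i/l, j)` of `ℚ²` attached to an exponent pair `(i,j)`. -/
def pt (l : ℕ) (p : ℤ × ℕ) : ℚ × ℚ := ((p.1 : ℚ) / (l : ℚ), (p.2 : ℚ))

/-- The `(ρ,σ)`-degree `ρ·(i/l) + σ·j` of an exponent pair. -/
def dg (l : ℕ) (ρ σ : ℤ) (p : ℤ × ℕ) : ℚ :=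
  (ρ : ℚ) * ((p.1 : ℚ) / (l : ℚ)) + (σ : ℚ) * (p.2 : ℚ)

/-- `v_{ρ,σ}(P) ∈ WithBot ℚ`, with the convention `v_{ρ,σ}(0) = ⊥ = −∞`. -/
def v (l : ℕ) (ρ σ : ℤ) (P : Ll K) : WithBot ℚ :=
  P.coeff.support.sup fun p => ((dg l ρ σ p : ℚ) : WithBot ℚ)

/-- `ℚ`-valued `(ρ,σ)`-degree (with junk value `0` at `P = 0`). -/
def vq (l : ℕ) (ρ σ : ℤ) (P : Ll K) : ℚ := (v l ρ σ P).unbotD 0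

/-- The `(ρ,σ)`-leading form `ℓ_{ρ,σ}(P)`. -/
def lead (l : ℕ) (ρ σ : ℤ) (P : Ll K) : Ll K :=
  AddMonoidAlgebra.ofCoeff (Finsupp.filter (fun p => ((dg l ρ σ p : ℚ) : WithBot ℚ) = v l ρ σ P) P.coeff)

/-- `(ρ,σ)`-homogeneity. -/
def IsHomog (l : ℕ) (ρ σ : ℤ) (P : Ll K) : Prop := P = lead l ρ σ P

/-- Directions: coprime pairs of integers. -/
def IsDirV (d : ℤ × ℤ) : Prop := Int.gcd d.1 d.2 = 1

/-- `Dir(P)`: the set of directions in which the leading form is not a monomial. -/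
def DirSet (l : ℕ) (P : Ll K) : Set (ℤ × ℤ) :=
  {d | IsDirV d ∧ 1 < (lead l d.1 d.2 P).coeff.support.card}

/-- Cross product of two vectors of `ℚ²`. -/
def cross (A B : ℚ × ℚ) : ℚ := A.1 * B.2 - A.2 * B.1

/-- Dot product of two vectors of `ℚ²`. -/
def dot (A B : ℚ × ℚ) : ℚ := A.1 * B.1 + A.2 * B.2

/-- Alignment `A ∼ B`. -/
def Aligned (A B : ℚ × ℚ) : Prop := cross A B = 0

/-- A pair of integers viewed in `ℚ²`. -/
def dq (d : ℤ × ℤ) : ℚ × ℚ := ((d.1 : ℚ), (d.2 : ℚ))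

/-- Evaluation `v_{ρ,σ}` at a point of `ℚ²`. -/
def vpt (ρ σ : ℤ) (A : ℚ × ℚ) : ℚ := (ρ : ℚ) * A.1 + (σ : ℚ) * A.2

/-- `st_{ρ,σ}(P)`: the endpoint of the segment `Supp(ℓ_{ρ,σ}(P))` at which the
functional `(ρ,σ) × ·` is minimal (so that `(ρ,σ) × (en − st) ≥ 0`). -/
def stPt (l : ℕ) (ρ σ : ℤ) (P : Ll K) : ℚ × ℚ :=
  if h : (lead l ρ σ P).coeff.support.Nonempty then
    pt l <| Classical.choose <|
      (lead l ρ σ P).coeff.support.exists_min_image (fun p => cross (dq (ρ, σ)) (pt l p)) h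
  else (0, 0)

/-- `en_{ρ,σ}(P)`: the other endpoint of the segment `Supp(ℓ_{ρ,σ}(P))`. -/
def enPt (l : ℕ) (ρ σ : ℤ) (P : Ll K) : ℚ × ℚ :=
  if h : (lead l ρ σ P).coeff.support.Nonempty then
    pt l <| Classical.choose <|
      (lead l ρ σ P).coeff.support.exists_max_image (fun p => cross (dq (ρ, σ)) (pt l p)) h
  else (0, 0)

/-- The index (`0`–`3`) of a direction `a` in the counterclockwise sweep of the circle of
directions starting just after the base direction `u`. -/
def idx (u a : ℤ × ℤ) : ℕ :=
  if 0 < cross (dq u) (dq a) then 0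
  else if cross (dq u) (dq a) = 0 ∧ dot (dq u) (dq a) < 0 then 1
  else if cross (dq u) (dq a) < 0 then 2
  else 3

/-- The strict counterclockwise order on directions with base point `u`:  `a` is
encountered strictly before `b` when running counterclockwise starting just after `u`. -/
def ccwLt (u a b : ℤ × ℤ) : Prop :=
  idx u a < idx u b ∨ (idx u a = idx u b ∧ 0 < cross (dq a) (dq b))

/-- Reflexive closure of `ccwLt`. -/
def ccwLe (u a b : ℤ × ℤ) : Prop := a = b ∨ ccwLt u a b

/-- `w = Succ_P(u)`: the first element of `Dir(P)` encountered starting from `u` and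
running counterclockwise. -/
def IsSucc (l : ℕ) (P : Ll K) (u w : ℤ × ℤ) : Prop :=
  w ∈ DirSet l P ∧ w ≠ u ∧ ∀ w' ∈ DirSet l P, w' ≠ u → ccwLe u w w'

/-- `(m,n)`-pairs in `L^(l)`. -/
structure IsMNPair (l m n : ℕ) (P Q : Ll K) : Prop where
  coprime : Nat.Coprime m n
  one_lt_m : 1 < m
  one_lt_n : 1 < n
  jac : JacConst l P Q
  ratio11 : vq l 1 1 P / vq l 1 1 Q = (m : ℚ) / (n : ℚ)
  ratio10 : vq l 1 0 P / vq l 1 0 Q = (m : ℚ) / (n : ℚ)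
  en10 : vpt 1 (-1) (enPt l 1 0 P) < 0

/-- Standard `(m,n)`-pairs (in `L^(1)`). -/
def IsStandard (m n : ℕ) (P Q : Ll K) : Prop :=
  IsMNPair 1 m n P Q ∧ vpt 1 (-1) (stPt 1 1 0 P) < 0

/-- Membership in the interval of directions `I = ](1,−1),(1,0)]`. -/
def InI (d : ℤ × ℤ) : Prop := IsDirV d ∧ 0 < d.1 + d.2 ∧ d.2 ≤ 0

/-- Regular corners of an `(m,n)`-pair. -/
def IsRegCorner (l m : ℕ) (P : Ll K) (A : ℚ × ℚ) (d : ℤ × ℤ) : Prop :=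
  (∃ a : ℤ, ∃ b : ℕ, A = ((a : ℚ) / (l : ℚ), (b : ℚ)) ∧ 1 ≤ b ∧ (a : ℚ) / (l : ℚ) < (b : ℚ)) ∧
  InI d ∧ d ∈ DirSet l P ∧ enPt l d.1 d.2 P = ((m : ℚ) * A.1, (m : ℚ) * A.2)

/-- The set `A(P)`. -/
def ASet (l : ℕ) (P : Ll K) : Set (ℤ × ℤ) :=
  {d | d ∈ DirSet l P ∧ InI d ∧
    vpt 0 (-1) (stPt l d.1 d.2 P) < -1 ∧ vpt 1 (-1) (stPt l d.1 d.2 P) < 0}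

/-- The univariate polynomial `𝔭` with `ℓ_{ρ,σ}(P) = x^(k/l) 𝔭(z)`, `z := x^(−σ/ρ) y`
(for a `(ρ,σ)`-homogeneous element with `ρ > 0`, the `z`-degree equals the `y`-degree). -/
def toPoly (R : Ll K) : Polynomial K :=
  Finsupp.sum R.coeff fun p c => Polynomial.C c * Polynomial.X ^ p.2

/-- The minimal `y`-exponent occurring in `R`. -/
def ymin (R : Ll K) : ℕ := sInf (Prod.snd '' (R.coeff.support : Set (ℤ × ℕ)))

/-- The univariate polynomial `p` with `ℓ_{ρ,σ}(P) = x^(r/l) y^s p(z)` and `p(0) ≠ 0`. -/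
def toPolyL (R : Ll K) : Polynomial K :=
  Finsupp.sum R.coeff fun p c => Polynomial.C c * Polynomial.X ^ (p.2 - ymin R)

/-- A regular corner in direction `d` is of type II. -/
def TypeII (l : ℕ) (P Q : Ll K) (d : ℤ × ℤ) : Prop :=
  br l (lead l d.1 d.2 P) (lead l d.1 d.2 Q) = 0 ∧
    1 < (toPoly (lead l d.1 d.2 P)).roots.toFinset.card

variable (K)

/-- The polynomial subalgebra `K[x,y] ⊆ L^(1)`. -/
def polyAlg : Subalgebra K (Ll K) := Algebra.adjoin K {xVar 1, yVar}

/-- `(P,Q)` is a counterexample to the Jacobian Conjecture: `P, Q ∈ K[x,y]`, the Jacobian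
`[P,Q]` is a nonzero constant, and `K[P,Q] ≠ K[x,y]`. -/
def IsCtrex (P Q : Ll K) : Prop :=
  P ∈ polyAlg K ∧ Q ∈ polyAlg K ∧ JacConst 1 P Q ∧ Algebra.adjoin K {P, Q} ≠ polyAlg K

/-- The set of numbers `gcd(v_{1,1}(P), v_{1,1}(Q))` over all counterexamples `(P,Q)`. -/
def BSet : Set ℕ :=
  {d | ∃ P Q : Ll K, ∃ dP dQ : ℕ, IsCtrex K P Q ∧
    (dP : ℚ) = vq 1 1 1 P ∧ (dQ : ℚ) = vq 1 1 1 Q ∧ d = Nat.gcd dP dQ}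

/-- The number `B`: the minimum of `gcd(v_{1,1}(P), v_{1,1}(Q))` over all counterexamples. -/
def Bnum : ℕ := sInf (BSet K)

variable {K}

/-!
Let `D = [·, P]`. It is a derivation with `D P = 0` and `D Q = -[P,Q]` constant, hence locally
nilpotent on `K[P,Q]`. Given `G ∈ K[P,Q]` with `[ℓ(G), ℓ(P)] ≠ 0`, take the last `k` with
`[ℓ(Dᵏ G), ℓ(P)] ≠ 0` and put `G_i = D^(k+i) G`; as `ℓ([A,B]) = [ℓ(A), ℓ(B)]` whenever the right
side is nonzero, `[[ℓ(G₀), ℓ(P)], ℓ(P)] = [ℓ(G₁), ℓ(P)] = 0`.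

Such a `G` exists. Otherwise `[ℓ(F), ℓ(P)] = 0` for every `F ∈ K[P,Q]`, which forces
`v([F,P]) < v(F) + v(P) - ρ - σ`. Commuting homogeneous elements of nonzero degree are
proportional up to powers (an Euler-derivation argument), so some `F' = F^(a+1) P^b - c P^d` has
`v(F') - v([F',P]) < v(F) - v([F,P])`. These numbers lie in `(1/l)ℤ` and are bounded below, so
the descent started at `F = Q` (where `[Q,P] ≠ 0`) cannot go on forever.
-/

open AddMonoidAlgebra
open scoped Pointwise

section Bracket

variable (l : ℕ)

@[simp] lemma dX_single (p : ℤ × ℕ) (c : K) :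
    dX l (single p c) = single (p.1 - l, p.2) (c * ((p.1 : K) / l)) :=
  Finsupp.sum_single_index (by simp)

@[simp] lemma dY_single (p : ℤ × ℕ) (c : K) :
    dY (single p c) = single (p.1, p.2 - 1) (c * (p.2 : K)) :=
  Finsupp.sum_single_index (by simp)

lemma dX_add (A B : Ll K) : dX l (A + B) = dX l A + dX l B := by
  unfold dX
  rw [coeff_add]
  exact Finsupp.sum_add_index (by simp) (by intros; rw [add_mul, single_add])

lemma dY_add (A B : Ll K) : dY (A + B) = dY A + dY B := by
  unfold dY
  rw [coeff_add]
  exact Finsupp.sum_add_index (by simp) (by intros; rw [add_mul, single_add])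

lemma dX_smul (c : K) (A : Ll K) : dX l (c • A) = c • dX l A := by
  unfold dX
  rw [coeff_smul, Finsupp.sum_smul_index' (by simp), Finsupp.smul_sum]
  exact Finsupp.sum_congr fun p _ => by rw [smul_single, smul_eq_mul, smul_eq_mul, mul_assoc]

lemma dY_smul (c : K) (A : Ll K) : dY (c • A) = c • dY A := by
  unfold dY
  rw [coeff_smul, Finsupp.sum_smul_index' (by simp), Finsupp.smul_sum]
  exact Finsupp.sum_congr fun p _ => by rw [smul_single, smul_eq_mul, smul_eq_mul, mul_assoc]

lemma leibniz_of_single (D : Ll K →ₗ[K] Ll K)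
    (h : ∀ p q : ℤ × ℕ, ∀ a b : K, D (single p a * single q b) =
      single p a * D (single q b) + single q b * D (single p a)) (A B : Ll K) :
    D (A * B) = A • D B + B • D A := by
  simp only [smul_eq_mul]
  induction A using AddMonoidAlgebra.induction_linear with
  | zero => simp
  | add A₁ A₂ h₁ h₂ => rw [add_mul, map_add, h₁, h₂, map_add]; ring
  | single p a =>
    induction B using AddMonoidAlgebra.induction_linear with
    | zero => simp
    | add B₁ B₂ h₁ h₂ => rw [mul_add, map_add, h₁, h₂, map_add]; ring
    | single q b => exact h p q a b

def derX : Derivation K (Ll K) (Ll K) :=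
  Derivation.mk' ⟨⟨dX l, dX_add l⟩, dX_smul l⟩ <| leibniz_of_single _ fun p q a b => by
    have h₁ : p + (q.1 - l, q.2) = ((p + q).1 - l, (p + q).2) := by ext <;> simp; ring
    have h₂ : q + (p.1 - l, p.2) = ((p + q).1 - l, (p + q).2) := by ext <;> simp <;> ring
    simp only [LinearMap.coe_mk, AddHom.coe_mk, single_mul_single, dX_single, h₁, h₂, ← single_add]
    congr 1
    simp only [Prod.fst_add]
    push_cast
    ring

def derY : Derivation K (Ll K) (Ll K) :=
  Derivation.mk' ⟨⟨dY, dY_add⟩, dY_smul⟩ <| leibniz_of_single _ fun p q a b => by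
    have shift : ∀ r s : ℤ × ℕ, ∀ c : K,
        single (r + (s.1, s.2 - 1)) (c * s.2) = single ((r + s).1, (r + s).2 - 1) (c * s.2) := by
      intro r s c
      rcases Nat.eq_zero_or_pos s.2 with h | h
      · simp [h]
      · congr 1; ext <;> simp; omega
    simp only [LinearMap.coe_mk, AddHom.coe_mk, single_mul_single, dY_single, ← mul_assoc,
      shift, add_comm q p, ← single_add]
    congr 1
    simp only [Prod.snd_add]
    push_cast
    ring

@[simp] lemma derX_apply (A : Ll K) : derX l A = dX l A := rfl

@[simp] lemma derY_apply (A : Ll K) : derY A = dY A := rfl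

@[simp] lemma dX_zero : dX l (0 : Ll K) = 0 := map_zero (derX l)

@[simp] lemma dY_zero : dY (0 : Ll K) = 0 := map_zero derY

def brDer (C : Ll K) : Derivation K (Ll K) (Ll K) := dY C • derX l - dX l C • derY

lemma brDer_apply (C A : Ll K) : brDer l C A = br l A C := by
  simp only [brDer, br, Derivation.coe_sub, Derivation.coe_smul, Pi.sub_apply, Pi.smul_apply,
    smul_eq_mul]
  change dY C * dX l A - dX l C * dY A = _
  ring

lemma br_antisymm (A B : Ll K) : br l A B = -br l B A := by
  simp only [br]; ring

lemma br_self (A : Ll K) : br l A A = 0 := by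
  simp only [br]; ring

end Bracket

section Degree

variable {l : ℕ} {ρ σ : ℤ}

lemma dg_add (p q : ℤ × ℕ) : dg l ρ σ (p + q) = dg l ρ σ p + dg l ρ σ q := by
  simp only [dg, Prod.fst_add, Prod.snd_add]
  push_cast
  ring

lemma dg_zero : dg l ρ σ 0 = 0 := by simp [dg]

variable (l ρ σ) in
def degIn (I : Set ℚ) : Submodule K (Ll K) := supported K K (dg l ρ σ ⁻¹' I)

variable {I J M : Set ℚ} {A B : Ll K} {d : ℚ}

lemma mem_degIn : A ∈ degIn l ρ σ I ↔ ∀ p ∈ A.coeff.support, dg l ρ σ p ∈ I := Iff.rfl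

lemma degIn_mono (h : I ⊆ J) : degIn l ρ σ I ≤ degIn (K := K) l ρ σ J :=
  supported_mono (Set.preimage_mono h)

lemma degIn_singleton_le_Iic : degIn l ρ σ {d} ≤ degIn (K := K) l ρ σ (Set.Iic d) :=
  degIn_mono (Set.singleton_subset_iff.mpr (Set.mem_Iic.mpr le_rfl))

lemma coeff_support_nonempty (hA : A ≠ 0) : A.coeff.support.Nonempty :=
  Finsupp.support_nonempty_iff.mpr (mt coeff_eq_zero.mp hA)

lemma eq_zero_of_mem_degIn_of_mem_degIn (hI : A ∈ degIn l ρ σ I) (hJ : A ∈ degIn l ρ σ J)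
    (h : Disjoint I J) : A = 0 := by
  by_contra hA
  obtain ⟨p, hp⟩ := coeff_support_nonempty hA
  exact h.ne_of_mem (mem_degIn.mp hI p hp) (mem_degIn.mp hJ p hp) rfl

lemma single_mem_degIn (p : ℤ × ℕ) (c : K) : single p c ∈ degIn l ρ σ {dg l ρ σ p} :=
  fun _ hq => Finset.mem_singleton.mp (Finsupp.support_single_subset hq) ▸ rfl

lemma mul_mem_degIn (hA : A ∈ degIn l ρ σ I) (hB : B ∈ degIn l ρ σ J)
    (h : I + J ⊆ M) : A * B ∈ degIn l ρ σ M := by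
  intro p hp
  obtain ⟨q, hq, r, hr, rfl⟩ := Finset.mem_add.mp (support_coeff_mul_subset A B hp)
  simpa [dg_add] using h (Set.add_mem_add (hA hq) (hB hr))

lemma dX_mem_degIn (hl : 0 < l) (hA : A ∈ degIn l ρ σ I) (h : ∀ x ∈ I, x - ρ ∈ M) :
    dX l A ∈ degIn l ρ σ M := by
  refine Submodule.sum_mem _ fun p hp => degIn_mono ?_ (single_mem_degIn _ _)
  have hl' : (l : ℚ) ≠ 0 := by positivity
  convert Set.singleton_subset_iff.mpr (h _ (hA hp)) using 2
  simp only [dg]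
  push_cast
  field_simp
  ring

lemma dY_mem_degIn (hA : A ∈ degIn l ρ σ I) (h : ∀ x ∈ I, x - σ ∈ M) :
    dY A ∈ degIn l ρ σ M := by
  refine Submodule.sum_mem _ fun p hp => ?_
  rcases Nat.eq_zero_or_pos p.2 with h0 | h0
  · simp [h0]
  · refine degIn_mono ?_ (single_mem_degIn _ _)
    convert Set.singleton_subset_iff.mpr (h _ (hA hp)) using 2
    simp only [dg]
    push_cast [Nat.cast_sub h0]
    ring

lemma br_mem_degIn (hl : 0 < l) (hA : A ∈ degIn l ρ σ I) (hB : B ∈ degIn l ρ σ J)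
    (h : ∀ x ∈ I, ∀ y ∈ J, x + y - ρ - σ ∈ M) : br l A B ∈ degIn l ρ σ M := by
  have hAx := dX_mem_degIn hl hA fun x hx => Set.mem_image_of_mem (· - (ρ : ℚ)) hx
  have hAy := dY_mem_degIn hA fun x hx => Set.mem_image_of_mem (· - (σ : ℚ)) hx
  have hBx := dX_mem_degIn hl hB fun x hx => Set.mem_image_of_mem (· - (ρ : ℚ)) hx
  have hBy := dY_mem_degIn hB fun x hx => Set.mem_image_of_mem (· - (σ : ℚ)) hx
  refine sub_mem (mul_mem_degIn hAx hBy ?_) (mul_mem_degIn hAy hBx ?_)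
  all_goals
    rintro _ ⟨_, ⟨x, hx, rfl⟩, _, ⟨y, hy, rfl⟩, rfl⟩
    convert h x hx y hy using 1
    ring

end Degree

section LeadingForm

variable {l : ℕ} {ρ σ : ℤ} {A B H H' : Ll K} {d e : ℚ}

@[simp] lemma vq_zero : vq l ρ σ (0 : Ll K) = 0 := rfl

lemma v_eq_coe_vq (hA : A ≠ 0) : v l ρ σ A = vq l ρ σ A := by
  obtain ⟨p, -, hv⟩ := Finset.exists_mem_eq_sup _ (coeff_support_nonempty hA)
    fun q => (dg l ρ σ q : WithBot ℚ)
  simp [vq, v, hv]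

lemma dg_le_vq {p : ℤ × ℕ} (hp : p ∈ A.coeff.support) : dg l ρ σ p ≤ vq l ρ σ A := by
  have hA : A ≠ 0 := by rintro rfl; simp at hp
  exact WithBot.coe_le_coe.mp
    (v_eq_coe_vq hA ▸ Finset.le_sup (f := fun q => (dg l ρ σ q : WithBot ℚ)) hp)

lemma exists_dg_eq_vq (hA : A ≠ 0) : ∃ p ∈ A.coeff.support, dg l ρ σ p = vq l ρ σ A := by
  obtain ⟨p, hp, hv⟩ := Finset.exists_mem_eq_sup _ (coeff_support_nonempty hA)
    fun q => (dg l ρ σ q : WithBot ℚ)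
  refine ⟨p, hp, WithBot.coe_injective ?_⟩
  rw [← v_eq_coe_vq hA]
  exact hv.symm

lemma mem_degIn_Iic_vq (A : Ll K) : A ∈ degIn l ρ σ (Set.Iic (vq l ρ σ A)) :=
  fun _ hp => dg_le_vq hp

lemma vq_le_of_mem_degIn_Iic (hA : A ≠ 0) (h : A ∈ degIn l ρ σ (Set.Iic d)) :
    vq l ρ σ A ≤ d := by
  obtain ⟨p, hp, hdg⟩ := exists_dg_eq_vq (l := l) (ρ := ρ) (σ := σ) hA
  exact hdg ▸ h hp

lemma vq_lt_of_mem_degIn_Iio (hA : A ≠ 0) (h : A ∈ degIn l ρ σ (Set.Iio d)) :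
    vq l ρ σ A < d := by
  obtain ⟨p, hp, hdg⟩ := exists_dg_eq_vq (l := l) (ρ := ρ) (σ := σ) hA
  exact hdg ▸ h hp

@[simp] lemma lead_zero : lead l ρ σ (0 : Ll K) = 0 := by
  ext p
  simp [lead, Finsupp.filter_apply]

lemma coeff_lead (hA : A ≠ 0) (p : ℤ × ℕ) :
    (lead l ρ σ A).coeff p = if dg l ρ σ p = vq l ρ σ A then A.coeff p else 0 := by
  simp [lead, Finsupp.filter_apply, v_eq_coe_vq hA]

lemma exists_int_eq_mul_vq (hl : 0 < l) (A : Ll K) : ∃ z : ℤ, (z : ℚ) = l * vq l ρ σ A := by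
  rcases eq_or_ne A 0 with rfl | hA
  · exact ⟨0, by simp⟩
  obtain ⟨p, -, hp⟩ := exists_dg_eq_vq (l := l) (ρ := ρ) (σ := σ) hA
  refine ⟨ρ * p.1 + σ * p.2 * l, ?_⟩
  rw [← hp, dg]
  field_simp
  push_cast
  ring

variable (l ρ σ) in
structure IsLeadForm (A H : Ll K) (d : ℚ) : Prop where
  ne_zero : H ≠ 0
  mem_degIn : H ∈ degIn l ρ σ {d}
  sub_mem_degIn : A - H ∈ degIn l ρ σ (Set.Iio d)

namespace IsLeadForm

lemma mem_degIn_Iic (h : IsLeadForm l ρ σ A H d) : A ∈ degIn l ρ σ (Set.Iic d) := by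
  rw [← sub_add_cancel A H]
  exact add_mem (degIn_mono Set.Iio_subset_Iic_self h.sub_mem_degIn)
    (degIn_mono (by simp) h.mem_degIn)

lemma coeff_eq {p : ℤ × ℕ} (h : IsLeadForm l ρ σ A H d) (hp : dg l ρ σ p = d) :
    A.coeff p = H.coeff p := by
  by_contra hne
  have hp' : p ∈ (A - H).coeff.support := by simpa [sub_eq_zero] using hne
  exact (h.sub_mem_degIn hp').ne hp

lemma ne_zero' (h : IsLeadForm l ρ σ A H d) : A ≠ 0 := by
  rintro rfl
  exact h.ne_zero (eq_zero_of_mem_degIn_of_mem_degIn (by simpa using h.sub_mem_degIn)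
    h.mem_degIn (by simp))

lemma vq_eq (h : IsLeadForm l ρ σ A H d) : vq l ρ σ A = d := by
  refine le_antisymm (vq_le_of_mem_degIn_Iic h.ne_zero' h.mem_degIn_Iic) ?_
  obtain ⟨p, hp⟩ := coeff_support_nonempty h.ne_zero
  have hpd : dg l ρ σ p = d := h.mem_degIn hp
  rw [← hpd]
  exact dg_le_vq (by simpa [h.coeff_eq hpd] using hp)

lemma lead_eq (h : IsLeadForm l ρ σ A H d) : lead l ρ σ A = H := by
  ext p
  rw [coeff_lead h.ne_zero', h.vq_eq]
  split_ifs with hp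
  · exact h.coeff_eq hp
  · by_contra hne
    exact hp (h.mem_degIn (Finsupp.mem_support_iff.mpr (Ne.symm hne)))

end IsLeadForm

lemma isLeadForm_lead (hA : A ≠ 0) : IsLeadForm l ρ σ A (lead l ρ σ A) (vq l ρ σ A) where
  ne_zero := by
    obtain ⟨p, hp, hdg⟩ := exists_dg_eq_vq (l := l) (ρ := ρ) (σ := σ) hA
    intro h
    exact Finsupp.mem_support_iff.mp hp (by simpa [coeff_lead hA, hdg] using congrArg (·.coeff p) h)
  mem_degIn := mem_degIn.mpr fun p hp => by
    simp only [Finsupp.mem_support_iff, coeff_lead hA] at hp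
    split_ifs at hp with h
    exacts [h, absurd rfl hp]
  sub_mem_degIn := mem_degIn.mpr fun p hp => by
    simp only [Finsupp.mem_support_iff, coeff_sub, Finsupp.sub_apply, coeff_lead hA] at hp
    split_ifs at hp with h
    · simp at hp
    · exact (dg_le_vq (by simpa using hp)).lt_of_ne h

end LeadingForm

section LeadingFormAlgebra

variable {l : ℕ} {ρ σ : ℤ} {A B H H' : Ll K} {d e : ℚ}

lemma isLeadForm_one : IsLeadForm l ρ σ (1 : Ll K) 1 0 where
  ne_zero := one_ne_zero
  mem_degIn := by
    simpa [one_def, dg_zero] using single_mem_degIn (K := K) (l := l) (ρ := ρ) (σ := σ) 0 1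
  sub_mem_degIn := by simp

lemma isLeadForm_self (hA : A ≠ 0) (h : A ∈ degIn l ρ σ {d}) : IsLeadForm l ρ σ A A d :=
  ⟨hA, h, by simp⟩

lemma br_sub_br (A B H H' : Ll K) :
    br l A B - br l H H' = br l H (B - H') + br l (A - H) B := by
  simp only [br, ← derX_apply, ← derY_apply, map_sub]
  ring

namespace IsLeadForm

lemma mul (h : IsLeadForm l ρ σ A H d) (h' : IsLeadForm l ρ σ B H' e) :
    IsLeadForm l ρ σ (A * B) (H * H') (d + e) where
  ne_zero := mul_ne_zero h.ne_zero h'.ne_zero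
  mem_degIn := mul_mem_degIn h.mem_degIn h'.mem_degIn (by simp)
  sub_mem_degIn := by
    rw [show A * B - H * H' = H * (B - H') + (A - H) * B by ring]
    exact add_mem
      (mul_mem_degIn (degIn_singleton_le_Iic h.mem_degIn) h'.sub_mem_degIn
        (Set.Iic_add_Iio_subset _ _))
      (mul_mem_degIn h.sub_mem_degIn h'.mem_degIn_Iic (Set.Iio_add_Iic_subset _ _))

lemma pow (h : IsLeadForm l ρ σ A H d) (n : ℕ) : IsLeadForm l ρ σ (A ^ n) (H ^ n) (n * d) := by
  induction n with
  | zero => simpa using isLeadForm_one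
  | succ n ih => simpa [pow_succ, add_mul] using ih.mul h

lemma smul (h : IsLeadForm l ρ σ A H d) {c : K} (hc : c ≠ 0) :
    IsLeadForm l ρ σ (c • A) (c • H) d where
  ne_zero := smul_ne_zero hc h.ne_zero
  mem_degIn := Submodule.smul_mem _ c h.mem_degIn
  sub_mem_degIn := by simpa [← smul_sub] using Submodule.smul_mem _ c h.sub_mem_degIn

lemma sub_mem_degIn_Iio (h : IsLeadForm l ρ σ A H d) (h' : IsLeadForm l ρ σ B H d) :
    A - B ∈ degIn l ρ σ (Set.Iio d) := by
  simpa using sub_mem h.sub_mem_degIn h'.sub_mem_degIn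

lemma br_sub_br_mem (hl : 0 < l) (h : IsLeadForm l ρ σ A H d) (h' : IsLeadForm l ρ σ B H' e) :
    br l A B - br l H H' ∈ degIn l ρ σ (Set.Iio (d + e - ρ - σ)) := by
  rw [br_sub_br]
  exact add_mem
    (br_mem_degIn hl (degIn_singleton_le_Iic h.mem_degIn) h'.sub_mem_degIn
      fun _ hx _ hy => Set.mem_Iio.mpr (by linarith [Set.mem_Iic.mp hx, Set.mem_Iio.mp hy]))
    (br_mem_degIn hl h.sub_mem_degIn h'.mem_degIn_Iic
      fun _ hx _ hy => Set.mem_Iio.mpr (by linarith [Set.mem_Iio.mp hx, Set.mem_Iic.mp hy]))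

lemma br (hl : 0 < l) (h : IsLeadForm l ρ σ A H d) (h' : IsLeadForm l ρ σ B H' e)
    (hne : JC.br l H H' ≠ 0) :
    IsLeadForm l ρ σ (JC.br l A B) (JC.br l H H') (d + e - ρ - σ) where
  ne_zero := hne
  mem_degIn := br_mem_degIn hl h.mem_degIn h'.mem_degIn (by simp)
  sub_mem_degIn := h.br_sub_br_mem hl h'

lemma br_mem_degIn_Iio (hl : 0 < l) (h : IsLeadForm l ρ σ A H d) (h' : IsLeadForm l ρ σ B H' e)
    (h0 : JC.br l H H' = 0) : JC.br l A B ∈ degIn l ρ σ (Set.Iio (d + e - ρ - σ)) := by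
  simpa [h0] using h.br_sub_br_mem hl h'

end IsLeadForm

lemma lead_br (hl : 0 < l)
    (h : br l (lead l ρ σ A) (lead l ρ σ B) ≠ 0) :
    lead l ρ σ (br l A B) = br l (lead l ρ σ A) (lead l ρ σ B) := by
  have hA : A ≠ 0 := by rintro rfl; simp [br] at h
  have hB : B ≠ 0 := by rintro rfl; simp [br] at h
  exact ((isLeadForm_lead hA).br hl (isLeadForm_lead hB) h).lead_eq

end LeadingFormAlgebra

section Euler

variable (l : ℕ)

def eulerDer (ρ σ : ℤ) : Derivation K (Ll K) (Ll K) :=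
  (ρ : K) • (xVar l : Ll K) • derX l + (σ : K) • (yVar : Ll K) • derY

variable {l}

lemma eulerDer_apply (ρ σ : ℤ) (A : Ll K) :
    eulerDer l ρ σ A = (ρ : K) • (xVar l * dX l A) + (σ : K) • (yVar * dY A) := rfl

lemma eulerDer_single (ρ σ : ℤ) (p : ℤ × ℕ) (c : K) :
    eulerDer l ρ σ (single p c) = single p ((dg l ρ σ p : K) * c) := by
  have hx : xVar l * dX l (single p c) = single p (c * ((p.1 : K) / l)) := by
    simp [xVar, single_mul_single]
  have hy : yVar * dY (single p c) = single p (c * p.2) := by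
    rcases Nat.eq_zero_or_pos p.2 with h | h
    · simp [h]
    · simp only [yVar, dY_single, single_mul_single, one_mul]
      congr 1
      ext <;> simp
      omega
  rw [eulerDer_apply, hx, hy, smul_single, smul_single, ← single_add]
  congr 1
  simp only [dg, smul_eq_mul]
  push_cast
  ring

lemma coeff_eulerDer (ρ σ : ℤ) (A : Ll K) (p : ℤ × ℕ) :
    (eulerDer l ρ σ A).coeff p = (dg l ρ σ p : K) * A.coeff p := by
  induction A using AddMonoidAlgebra.induction_linear with
  | zero => simp
  | add A B hA hB => simp [hA, hB, mul_add]
  | single q c =>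
    rw [eulerDer_single, coeff_single, coeff_single, Finsupp.single_apply, Finsupp.single_apply]
    split_ifs with h
    · rw [h]
    · simp

variable {ρ σ ρ' σ' : ℤ} {A : Ll K} {d : ℚ}

lemma eulerDer_eq_of_mem_degIn (h : A ∈ degIn l ρ σ {d}) :
    eulerDer l ρ σ A = algebraMap K (Ll K) d * A := by
  ext p
  rw [coeff_eulerDer, ← smul_eq_mul, ← Algebra.smul_def, coeff_smul, Finsupp.smul_apply,
    smul_eq_mul]
  by_cases hp : p ∈ A.coeff.support
  · rw [show dg l ρ σ p = d from h hp, Algebra.smul_def]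
    rfl
  · simp [Finsupp.notMem_support_iff.mp hp]

lemma eulerDer_mem_degIn {l' : ℕ} {I : Set ℚ} (h : A ∈ degIn l' ρ' σ' I) :
    eulerDer l ρ σ A ∈ degIn l' ρ' σ' I :=
  mem_degIn.mpr fun p hp => h (by
    rw [Finsupp.mem_support_iff, coeff_eulerDer] at hp
    exact Finsupp.mem_support_iff.mpr (right_ne_zero_of_mul hp))

end Euler

section DerivationPowers

variable {A : Type*} [CommRing A] {R : Type*} [CommRing R] [Algebra R A] (D : Derivation R A A)
  {a b r s : A}

lemma _root_.Derivation.mul_apply_pow_mul_pow (h : r * (a * D b) = s * (b * D a)) (m n : ℕ) :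
    r * (a * D (b ^ m * a ^ n)) = (m * s + n * r) * (b ^ m * a ^ n * D a) := by
  simp only [Derivation.leibniz, Derivation.leibniz_pow, smul_eq_mul, nsmul_eq_mul]
  rcases m with _ | m <;> rcases n with _ | n <;>
    simp only [Nat.cast_zero, Nat.cast_succ, Nat.add_sub_cancel]
  · ring
  · ring
  · linear_combination (m + 1 : A) * b ^ m * h
  · linear_combination (m + 1 : A) * b ^ m * a ^ (n + 1) * h

lemma _root_.Derivation.apply_mul_eq_mul_apply_of_pow_mul_pow [IsDomain A]
    (h : r * (a * D b) = s * (b * D a)) (hr : r ≠ 0) (ha : a ≠ 0) {m n m' n' : ℕ}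
    (hdeg : m * s + n * r = m' * s + n' * r) :
    D (b ^ m * a ^ n) * (b ^ m' * a ^ n') = b ^ m * a ^ n * D (b ^ m' * a ^ n') := by
  refine mul_left_cancel₀ (mul_ne_zero hr ha) ?_
  linear_combination (b ^ m' * a ^ n') * D.mul_apply_pow_mul_pow h m n
    - (b ^ m * a ^ n) * D.mul_apply_pow_mul_pow h m' n'
    + (b ^ m * a ^ n * b ^ m' * a ^ n' * D a) * hdeg

end DerivationPowers

section Proportionality

variable {l : ℕ} {ρ σ ρ' σ' : ℤ} {R S U V : Ll K} {r s d : ℚ}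

/-- With `E = eulerDer l α β`, `r R E(S) - s S E(R) = (ρβ - σα) x y [R,S]` by Euler's identity
`eulerDer l ρ σ R = r R`. -/
lemma algebraMap_mul_eulerDer (hR : R ∈ degIn l ρ σ {r}) (hS : S ∈ degIn l ρ σ {s})
    (hRS : br l R S = 0) (α β : ℤ) :
    algebraMap K (Ll K) r * (R * eulerDer l α β S) =
      algebraMap K (Ll K) s * (S * eulerDer l α β R) := by
  rw [← mul_assoc, ← mul_assoc, ← eulerDer_eq_of_mem_degIn hR, ← eulerDer_eq_of_mem_degIn hS]
  rw [br] at hRS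
  simp only [eulerDer_apply, Algebra.smul_def]
  linear_combination (algebraMap K (Ll K) ρ * algebraMap K (Ll K) β -
    algebraMap K (Ll K) σ * algebraMap K (Ll K) α) * xVar l * yVar * hRS

/-- Otherwise, by Euler's identity, `E(U) V - U E(V)` has the nonzero leading form
`(v(U) - v(V)) ℓ(U) ℓ(V)`. -/
lemma vq_eq_of_eulerDer_mul_eq (hU : U ≠ 0) (hV : V ≠ 0)
    (h : eulerDer l ρ σ U * V = U * eulerDer l ρ σ V) : vq l ρ σ U = vq l ρ σ V := by
  set E := eulerDer (K := K) l ρ σ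
  obtain ⟨hU0, hUd, hUsub⟩ := isLeadForm_lead (l := l) (ρ := ρ) (σ := σ) hU
  obtain ⟨hV0, hVd, hVsub⟩ := isLeadForm_lead (l := l) (ρ := ρ) (σ := σ) hV
  set u := vq l ρ σ U
  set v := vq l ρ σ V
  set U' := lead l ρ σ U
  set V' := lead l ρ σ V
  by_contra huv
  have hlead : IsLeadForm l ρ σ (E U * V - U * E V)
      (algebraMap K (Ll K) ((u - v : ℚ) : K) * (U' * V')) (u + v) := by
    have hc : algebraMap K (Ll K) ((u - v : ℚ) : K) ≠ 0 :=
      (map_ne_zero _).mpr (by exact_mod_cast sub_ne_zero.mpr huv)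
    refine ⟨mul_ne_zero hc (mul_ne_zero hU0 hV0), ?_, ?_⟩
    · rw [← Algebra.smul_def]
      exact Submodule.smul_mem _ _ (mul_mem_degIn hUd hVd (by simp))
    · have hsplit : E U * V - U * E V - algebraMap K (Ll K) ((u - v : ℚ) : K) * (U' * V') =
          E (U - U') * V + E U' * (V - V') - ((U - U') * E V + U' * E (V - V')) := by
        simp only [E, map_sub, Rat.cast_sub, eulerDer_eq_of_mem_degIn hUd,
          eulerDer_eq_of_mem_degIn hVd]
        ring
      have hVle := mem_degIn_Iic_vq (l := l) (ρ := ρ) (σ := σ) V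
      rw [hsplit]
      refine sub_mem (add_mem ?_ ?_) (add_mem ?_ ?_)
      · exact mul_mem_degIn (eulerDer_mem_degIn hUsub) hVle
          (Set.Iio_add_Iic_subset _ _)
      · exact mul_mem_degIn (eulerDer_mem_degIn (degIn_singleton_le_Iic hUd)) hVsub
          (Set.Iic_add_Iio_subset _ _)
      · exact mul_mem_degIn hUsub (eulerDer_mem_degIn hVle)
          (Set.Iio_add_Iic_subset _ _)
      · exact mul_mem_degIn (degIn_singleton_le_Iic hUd) (eulerDer_mem_degIn hVsub)
          (Set.Iic_add_Iio_subset _ _)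
  exact hlead.ne_zero' (sub_eq_zero.mpr h)

lemma eq_of_dg_eq_of_dg_eq (hl : 0 < l) (hdet : ρ * σ' - σ * ρ' ≠ 0) {p q : ℤ × ℕ}
    (h : dg l ρ σ p = dg l ρ σ q) (h' : dg l ρ' σ' p = dg l ρ' σ' q) : p = q := by
  simp only [dg] at h h'
  have hdet' : (ρ * σ' - σ * ρ' : ℚ) ≠ 0 := by exact_mod_cast hdet
  have h₁ : ((p.1 : ℚ) / l - q.1 / l) * (ρ * σ' - σ * ρ') = 0 := by
    linear_combination σ' * h - σ * h'
  have h₂ : ((p.2 : ℚ) - q.2) * (ρ * σ' - σ * ρ') = 0 := by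
    linear_combination ρ * h' - ρ' * h
  rw [mul_eq_zero, or_iff_left hdet', sub_eq_zero, div_left_inj' (by positivity)] at h₁
  rw [mul_eq_zero, or_iff_left hdet', sub_eq_zero] at h₂
  ext <;> assumption_mod_cast

/-- On the line of `(ρ,σ)`-degree `d` the monomial of top `(ρ',σ')`-degree is unique; subtracting
the multiple of `V` that kills it in `U` lowers the `(ρ',σ')`-degree, which
`vq_eq_of_eulerDer_mul_eq` forbids unless the difference is `0`. -/
lemma exists_eq_smul_of_eulerDer_mul_eq (hl : 0 < l) (hdet : ρ * σ' - σ * ρ' ≠ 0)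
    (hU : U ∈ degIn l ρ σ {d}) (hV : V ∈ degIn l ρ σ {d}) (hV0 : V ≠ 0)
    (h : eulerDer l ρ' σ' U * V = U * eulerDer l ρ' σ' V) : ∃ c : K, U = c • V := by
  obtain ⟨q, hq, hqt⟩ := exists_dg_eq_vq (l := l) (ρ := ρ') (σ := σ') hV0
  set c := U.coeff q / V.coeff q
  refine ⟨c, sub_eq_zero.mp (by_contra fun hW => ?_)⟩
  set W := U - c • V
  have hU0 : U ≠ 0 := by rintro rfl; simp [W, c] at hW
  have hUV := vq_eq_of_eulerDer_mul_eq hU0 hV0 h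
  have hWV : eulerDer l ρ' σ' W * V = W * eulerDer l ρ' σ' V := by
    rw [map_sub, Derivation.map_smul]
    simp only [W, Algebra.smul_def]
    linear_combination h
  have hWd : W ∈ degIn l ρ σ {d} := sub_mem hU (Submodule.smul_mem _ c hV)
  have hWt : W ∈ degIn l ρ' σ' (Set.Iic (vq l ρ' σ' V)) :=
    sub_mem (hUV ▸ mem_degIn_Iic_vq U) (Submodule.smul_mem _ c (mem_degIn_Iic_vq V))
  have hWlt : W ∈ degIn l ρ' σ' (Set.Iio (vq l ρ' σ' V)) := mem_degIn.mpr fun p hp => by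
    refine (Set.mem_Iic.mp (mem_degIn.mp hWt p hp)).lt_of_ne fun hpt => ?_
    have hVq : V.coeff q ≠ 0 := Finsupp.mem_support_iff.mp hq
    obtain rfl : p = q := eq_of_dg_eq_of_dg_eq hl hdet
      ((mem_degIn.mp hWd p hp).trans (mem_degIn.mp hV q hq).symm) (hpt.trans hqt.symm)
    exact Finsupp.mem_support_iff.mp hp (by simp [W, c, hVq])
  exact (vq_lt_of_mem_degIn_Iio hW hWlt).ne (vq_eq_of_eulerDer_mul_eq hW hV0 hWV)

lemma exists_pow_mul_pow_eq_smul_pow (hl : 0 < l) (hR : R ∈ degIn l ρ σ {r})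
    (hS : S ∈ degIn l ρ σ {s}) (hR0 : R ≠ 0) (hS0 : S ≠ 0) (hr : r ≠ 0) (hRS : br l R S = 0)
    {a b d : ℕ} (habd : (a + 1) * s + b * r = d * r) :
    ∃ c : K, S ^ (a + 1) * R ^ b = c • R ^ d := by
  -- `(ρ,σ) ≠ 0` as `r ≠ 0`, so `(-σ, ρ)` is an independent second direction
  have hdet : ρ * ρ - σ * -σ ≠ 0 := by
    intro h0
    obtain ⟨rfl, rfl⟩ : ρ = 0 ∧ σ = 0 := ⟨mul_self_eq_zero.mp (by nlinarith [mul_self_nonneg σ]),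
      mul_self_eq_zero.mp (by nlinarith [mul_self_nonneg ρ])⟩
    obtain ⟨p, hp⟩ := coeff_support_nonempty hR0
    exact hr (by simpa [dg] using (mem_degIn.mp hR p hp).symm)
  have hT := ((isLeadForm_self hS0 hS).pow (a + 1)).mul ((isLeadForm_self hR0 hR).pow b)
  have hV := (isLeadForm_self hR0 hR).pow d
  push_cast at hT
  have hdeg : ((a + 1 : ℕ) : Ll K) * algebraMap K (Ll K) s + b * algebraMap K (Ll K) r =
      (0 : ℕ) * algebraMap K (Ll K) s + d * algebraMap K (Ll K) r := by
    have := congrArg (fun q : ℚ => algebraMap K (Ll K) q) habd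
    simp only [Rat.cast_add, Rat.cast_mul, Rat.cast_natCast, Rat.cast_one, map_add, map_mul,
      map_natCast, map_one] at this
    push_cast
    linear_combination this
  have hW := (eulerDer (K := K) l (-σ) ρ).apply_mul_eq_mul_apply_of_pow_mul_pow
    (algebraMap_mul_eulerDer hR hS hRS (-σ) ρ)
    ((map_ne_zero _).mpr (by exact_mod_cast hr)) hR0 hdeg
  exact exists_eq_smul_of_eulerDer_mul_eq hl hdet hT.mem_degIn (habd ▸ hV.mem_degIn) hV.ne_zero
    (by simpa using hW)

end Proportionality

/-- Write `s / r = m / (a + 1)` and split `m = d - b` into its positive and negative parts. -/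
lemma exists_nat_add_one_mul_add_eq {r : ℚ} (hr : r ≠ 0) (s : ℚ) :
    ∃ a b d : ℕ, (a + 1 : ℚ) * s + b * r = d * r := by
  set q := s / r
  obtain ⟨a, ha⟩ := Nat.exists_eq_add_one_of_ne_zero q.den_ne_zero
  refine ⟨a, (-q.num).toNat, q.num.toNat, ?_⟩
  have hnum : ((q.num.toNat : ℤ) : ℚ) - ((-q.num).toNat : ℤ) = q.num := by
    exact_mod_cast Int.toNat_sub_toNat_neg q.num
  have hs : (a + 1 : ℚ) * s = q.num * r := by
    rw [← Rat.mul_den_eq_num, ha, mul_right_comm, div_mul_cancel₀ _ hr]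
    push_cast
    ring
  push_cast at hnum
  linear_combination hs - r * hnum

section Descent

variable {l : ℕ} {ρ σ : ℤ} {F P Q : Ll K}

lemma vq_sub_vq_br_gt (hl : 0 < l) (hFP : br l F P ≠ 0)
    (hlead : br l (lead l ρ σ F) (lead l ρ σ P) = 0) :
    ρ + σ - vq l ρ σ P < vq l ρ σ F - vq l ρ σ (br l F P) := by
  have hF : F ≠ 0 := by rintro rfl; simp [br] at hFP
  have hP : P ≠ 0 := by rintro rfl; simp [br] at hFP
  have := vq_lt_of_mem_degIn_Iio hFP
    ((isLeadForm_lead hF).br_mem_degIn_Iio hl (isLeadForm_lead hP) hlead)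
  linarith

lemma br_pow_mul_pow_sub_smul_pow (l : ℕ) (F P : Ll K) (a b d : ℕ) (c : K) :
    br l (F ^ (a + 1) * P ^ b - c • P ^ d) P = ((a + 1 : ℕ) : K) • (F ^ a * P ^ b * br l F P) := by
  simp only [← brDer_apply, map_sub, Derivation.map_smul, Derivation.leibniz,
    Derivation.leibniz_pow]
  simp only [brDer_apply, br_self, smul_zero, mul_zero, zero_add, sub_zero, Nat.add_sub_cancel,
    smul_eq_mul, Nat.cast_smul_eq_nsmul, mul_smul_comm]
  ring

/-- The witness is `F' = F^(a+1) P^b - c P^d` with `(a+1) v(F) + b v(P) = d v(P)`: its two terms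
have the same leading form, so `v(F') < (a+1) v(F) + b v(P)`, while
`[F',P] = (a+1) F^a P^b [F,P]` has degree `a v(F) + b v(P) + v([F,P])`. -/
lemma exists_mem_adjoin_vq_sub_vq_br_lt (hl : 0 < l) (hr : vq l ρ σ P ≠ 0)
    (hFP : br l F P ≠ 0) (hlead : br l (lead l ρ σ F) (lead l ρ σ P) = 0) :
    ∃ F' ∈ Algebra.adjoin K {F, P}, br l F' P ≠ 0 ∧
      vq l ρ σ F' - vq l ρ σ (br l F' P) < vq l ρ σ F - vq l ρ σ (br l F P) := by
  have hF : F ≠ 0 := by rintro rfl; simp [br] at hFP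
  have hP : P ≠ 0 := by rintro rfl; simp [br] at hFP
  have hFl := isLeadForm_lead (l := l) (ρ := ρ) (σ := σ) hF
  have hPl := isLeadForm_lead (l := l) (ρ := ρ) (σ := σ) hP
  set r := vq l ρ σ P
  set s := vq l ρ σ F
  obtain ⟨a, b, d, habd⟩ := exists_nat_add_one_mul_add_eq hr s
  obtain ⟨c, hc⟩ := exists_pow_mul_pow_eq_smul_pow hl hPl.mem_degIn hFl.mem_degIn hPl.ne_zero
    hFl.ne_zero hr (by rw [br_antisymm, hlead, neg_zero]) habd
  have hT := (hFl.pow (a + 1)).mul (hPl.pow b)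
  push_cast at hT
  have hc0 : c ≠ 0 := by rintro rfl; exact hT.ne_zero (by simpa using hc)
  set F' := F ^ (a + 1) * P ^ b - c • P ^ d
  have hB := (((hFl.pow a).mul (hPl.pow b)).mul (isLeadForm_lead hFP)).smul
    (c := ((a + 1 : ℕ) : K)) (Nat.cast_ne_zero.mpr a.succ_ne_zero)
  rw [← br_pow_mul_pow_sub_smul_pow] at hB
  have hF'mem : F' ∈ Algebra.adjoin K {F, P} := by
    have hFmem : F ∈ Algebra.adjoin K {F, P} := Algebra.subset_adjoin (Set.mem_insert _ _)
    have hPmem : P ∈ Algebra.adjoin K {F, P} := Algebra.subset_adjoin (Set.mem_insert_of_mem _ rfl)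
    exact sub_mem (mul_mem (pow_mem hFmem _) (pow_mem hPmem _))
      (Subalgebra.smul_mem _ (pow_mem hPmem _) c)
  have hF'P : br l F' P ≠ 0 := hB.ne_zero'
  have hF' : F' ≠ 0 := by rintro h; simp [h, br] at hF'P
  have hV : IsLeadForm l ρ σ (c • P ^ d) (lead l ρ σ F ^ (a + 1) * lead l ρ σ P ^ b)
      ((a + 1) * s + b * r) := by
    rw [hc, habd]
    exact (hPl.pow d).smul hc0
  have hlt := vq_lt_of_mem_degIn_Iio hF' (hT.sub_mem_degIn_Iio hV)
  refine ⟨F', hF'mem, hF'P, ?_⟩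
  linarith [hB.vq_eq]

end Descent

section Existence

variable {l : ℕ} {ρ σ : ℤ} {P Q : Ll K}

/-- Descent on `l · (v(F) - v([F,P]))`, an integer bounded below by `l (ρ + σ - v(P))` as long as
the leading forms of `F` and `P` commute. -/
theorem exists_mem_adjoin_br_lead_ne_zero (hl : 0 < l) (hr : vq l ρ σ P ≠ 0)
    (hQP : br l Q P ≠ 0) :
    ∃ G ∈ Algebra.adjoin K {P, Q}, br l (lead l ρ σ G) (lead l ρ σ P) ≠ 0 := by
  by_contra! hall
  set δ : Ll K → ℚ := fun F => vq l ρ σ F - vq l ρ σ (br l F P)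
  have hint (F : Ll K) : ∃ z : ℤ, (z : ℚ) = l * δ F := by
    obtain ⟨z₁, h₁⟩ := exists_int_eq_mul_vq (ρ := ρ) (σ := σ) hl F
    obtain ⟨z₂, h₂⟩ := exists_int_eq_mul_vq (ρ := ρ) (σ := σ) hl (br l F P)
    exact ⟨z₁ - z₂, by push_cast; rw [h₁, h₂]; ring⟩
  have hl' : (0 : ℚ) < l := by exact_mod_cast hl
  obtain ⟨z, ⟨F, hF, hFP, hz⟩, hmin⟩ := Int.exists_least_of_bdd
    (P := fun z : ℤ => ∃ F ∈ Algebra.adjoin K {P, Q}, br l F P ≠ 0 ∧ (z : ℚ) = l * δ F)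
    ⟨⌊(l : ℚ) * (ρ + σ - vq l ρ σ P)⌋, fun z ⟨F, hF, hFP, hz⟩ => by
      have hgt := mul_lt_mul_of_pos_left (vq_sub_vq_br_gt hl hFP (hall F hF)) hl'
      exact_mod_cast ((Int.floor_le _).trans_lt (hz ▸ hgt)).le⟩
    (let ⟨z, hz⟩ := hint Q; ⟨z, Q, Algebra.subset_adjoin (by simp), hQP, hz⟩)
  obtain ⟨F', hF', hF'P, hlt⟩ := exists_mem_adjoin_vq_sub_vq_br_lt hl hr hFP (hall F hF)
  obtain ⟨z', hz'⟩ := hint F'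
  have hsub : Algebra.adjoin K {F, P} ≤ Algebra.adjoin K {P, Q} :=
    Algebra.adjoin_le <| Set.insert_subset_iff.mpr
      ⟨hF, by simpa using Algebra.subset_adjoin (by simp)⟩
  have hle := hmin z' ⟨F', hsub hF', hF'P, hz'⟩
  have : (z' : ℚ) < z := by rw [hz, hz']; exact mul_lt_mul_of_pos_left hlt hl'
  exact absurd hle (by exact_mod_cast this.not_ge)

end Existence

section LocallyNilpotent

variable {R A : Type*} [CommRing R] [CommRing A] [Algebra R A] (D : Derivation R A A)

lemma _root_.Derivation.mapsTo_adjoin {s : Set A} (hs : ∀ x ∈ s, D x ∈ Algebra.adjoin R s) :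
    Set.MapsTo D (Algebra.adjoin R s) (Algebra.adjoin R s) := fun x hx => by
  induction hx using Algebra.adjoin_induction with
  | mem x hx => exact hs x hx
  | algebraMap r => simp
  | add x y _ _ hx hy => simpa using add_mem hx hy
  | mul x y hx' hy' hx hy =>
    rw [Derivation.leibniz, smul_eq_mul, smul_eq_mul]
    exact add_mem (mul_mem hx' hy) (mul_mem hy' hx)

lemma _root_.Derivation.iterate_eq_zero_of_le {x : A} {m n : ℕ} (hx : D^[m] x = 0) (hmn : m ≤ n) :
    D^[n] x = 0 := by
  obtain ⟨k, rfl⟩ := Nat.exists_eq_add_of_le hmn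
  rw [add_comm, Function.iterate_add_apply, hx, iterate_map_zero]

lemma _root_.Derivation.iterate_mul_eq_zero {x y : A} {m n : ℕ} (hx : D^[m] x = 0)
    (hy : D^[n] y = 0) : D^[m + n] (x * y) = 0 := by
  induction h : m + n generalizing m n x y with
  | zero => obtain ⟨rfl, rfl⟩ : m = 0 ∧ n = 0 := by omega
            simp_all
  | succ N ih =>
    rcases m with _ | m
    · simp_all
    rcases n with _ | n
    · simp_all
    rw [Function.iterate_succ_apply, Derivation.leibniz, iterate_map_add, smul_eq_mul, smul_eq_mul,
      ih (m := m + 1) (n := n) hx (by rwa [← Function.iterate_succ_apply]) (by omega),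
      ih (m := n + 1) (n := m) hy (by rwa [← Function.iterate_succ_apply]) (by omega), add_zero]

lemma _root_.Derivation.exists_iterate_eq_zero_of_mem_adjoin {s : Set A}
    (hs : ∀ x ∈ s, ∃ n, D^[n] x = 0) {x : A} (hx : x ∈ Algebra.adjoin R s) :
    ∃ n, D^[n] x = 0 := by
  induction hx using Algebra.adjoin_induction with
  | mem x hx => exact hs x hx
  | algebraMap r => exact ⟨1, D.map_algebraMap r⟩
  | add x y _ _ hx hy =>
    obtain ⟨⟨m, hm⟩, ⟨n, hn⟩⟩ := And.intro hx hy
    exact ⟨m + n, by rw [iterate_map_add, D.iterate_eq_zero_of_le hm (by omega),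
      D.iterate_eq_zero_of_le hn (by omega), add_zero]⟩
  | mul x y _ _ hx hy =>
    obtain ⟨⟨m, hm⟩, ⟨n, hn⟩⟩ := And.intro hx hy
    exact ⟨m + n, D.iterate_mul_eq_zero hm hn⟩

end LocallyNilpotent

lemma exists_last_of_forall_ge_not {p : ℕ → Prop} {N : ℕ} (h₀ : p 0) (hN : ∀ n ≥ N, ¬p n) :
    ∃ k, p k ∧ ∀ i, 1 ≤ i → ¬p (k + i) := by
  classical
  refine ⟨Nat.findGreatest p N, Nat.findGreatest_spec (Nat.zero_le N) h₀, fun i hi => ?_⟩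
  by_cases hle : Nat.findGreatest p N + i ≤ N
  · exact Nat.findGreatest_is_greatest (by omega) hle
  · exact hN _ (by omega)

theorem statement2_general (l : ℕ) (hl : 0 < l) (ρ σ : ℤ)
    (P Q : Ll K) (hjac : JacConst l P Q) (hv : vq l ρ σ P ≠ 0) :
    ∃ G : ℕ → Ll K,
      G 0 ∈ Algebra.adjoin K {P, Q} ∧
      (∀ i, G (i + 1) = br l (G i) P) ∧
      br l (lead l ρ σ (G 0)) (lead l ρ σ P) ≠ 0 ∧
      br l (br l (lead l ρ σ (G 0)) (lead l ρ σ P)) (lead l ρ σ P) = 0 ∧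
      (∀ i, 1 ≤ i → br l (lead l ρ σ (G i)) (lead l ρ σ P) = 0) := by
  obtain ⟨c, hc, hPQ⟩ := hjac
  set D := brDer l P
  have hDP : D P = 0 := by rw [brDer_apply, br_self]
  have hDQ : D Q = algebraMap K (Ll K) (-c) := by rw [brDer_apply, br_antisymm, hPQ, map_neg]
  have hQP : br l Q P ≠ 0 := by
    rw [← brDer_apply, hDQ]
    exact (map_ne_zero _).mpr (neg_ne_zero.mpr hc)
  obtain ⟨G, hG, hGP⟩ := exists_mem_adjoin_br_lead_ne_zero hl hv hQP
  obtain ⟨N, hN⟩ := D.exists_iterate_eq_zero_of_mem_adjoin (s := {P, Q}) (by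
    rintro x (rfl | rfl)
    exacts [⟨1, hDP⟩, ⟨2, by rw [Function.iterate_succ_apply', Function.iterate_one, hDQ,
      Derivation.map_algebraMap]⟩]) hG
  obtain ⟨k, hk, hk'⟩ := exists_last_of_forall_ge_not
    (p := fun n => br l (lead l ρ σ (D^[n] G)) (lead l ρ σ P) ≠ 0) (N := N) hGP
    fun n hn => by simp [D.iterate_eq_zero_of_le hN hn, br]
  have hmaps := D.mapsTo_adjoin (s := {P, Q}) (by
    rintro x (rfl | rfl)
    · simp [hDP]
    · exact hDQ ▸ Subalgebra.algebraMap_mem _ _)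
  refine ⟨fun i => D^[k + i] G, hmaps.iterate k hG,
    fun i => by simp only [← add_assoc, Function.iterate_succ_apply', D, brDer_apply],
    hk, ?_, fun i hi => not_not.mp (hk' i hi)⟩
  have h₁ := not_not.mp (hk' 1 le_rfl)
  rwa [Function.iterate_succ_apply', brDer_apply, lead_br hl hk] at h₁

/-- Lemma 2.2.  If `[P,Q] ∈ K^×` and `v_{ρ,σ}(P) ≠ 0`, then there is a
`G₀` in the subalgebra `K[P,Q]` with `[ℓ_{ρ,σ}(G₀), ℓ_{ρ,σ}(P)] ≠ 0` and
`[[ℓ_{ρ,σ}(G₀), ℓ_{ρ,σ}(P)], ℓ_{ρ,σ}(P)] = 0`; moreover, defining `G_i := [G_{i-1}, P]`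
recursively, `[ℓ_{ρ,σ}(G_i), ℓ_{ρ,σ}(P)] = 0` for all `i ≥ 1`. -/
theorem statement2 (l : ℕ) (hl : 0 < l) (ρ σ : ℤ) (hdir : IsDirV (ρ, σ))
    (P Q : Ll K) (hP : P ≠ 0) (hQ : Q ≠ 0)
    (hjac : JacConst l P Q) (hv : vq l ρ σ P ≠ 0) :
    ∃ G : ℕ → Ll K,
      G 0 ∈ Algebra.adjoin K {P, Q} ∧
      (∀ i, G (i + 1) = br l (G i) P) ∧
      br l (lead l ρ σ (G 0)) (lead l ρ σ P) ≠ 0 ∧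
      br l (br l (lead l ρ σ (G 0)) (lead l ρ σ P)) (lead l ρ σ P) = 0 ∧
      (∀ i, 1 ≤ i → br l (lead l ρ σ (G i)) (lead l ρ σ P) = 0) :=
  statement2_general l hl ρ σ P Q hjac hv

end JC
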